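/- Let G=(W,E) be a finite simple graph with W nonempty and let k be a natural number. Construct the parliamentary election whose running parties are p_1, o_2, and o_3, with spoiler parties S = {s_w : w ∈ W} available for addition, and with five voters per vertex w ∈ W: two voters ranking p_1 ≻ o_2 ≻ (all remaining parties in some fixed order); two voters ranking o_2 ≻ p_1 ≻ (all remaining parties); and one voter ranking the parties {s_u : u ∈ N[w]} first (in some fixed order), then o_2, then p_1, then all remaining parties. Let the coalition be C = {p_1} and the electoral threshold be τ = 2/5, so a party is active iff it receives at least 2|W| votes. Then G has a dominating set of size at most k if and only if there exists a set S⁺ ⊆ S with |S⁺| ≤ k such that, in the election whose running parties are {p_1, o_2, o_3} ∪ S⁺, the active-vote fraction of {p_1} is at least 1/2. -/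

import Mathlib

open scoped Classical

section Defs

variable {U V : Type*}

/-- `p` is the most-preferred member of the running set `P` under the linear order `L`
(greater means more preferred). -/
def TopOf (L : LinearOrder U) (P : Finset U) (p : U) : Prop :=
  p ∈ P ∧ ∀ q ∈ P, q ≠ p → L.lt q p

/-- Number of voters whose most-preferred running party lies in `A`. -/
noncomputable def votes [Fintype V] (pref : V → LinearOrder U) (P A : Finset U) : ℕ :=
  (Finset.univ.filter fun v : V => ∃ p ∈ A, TopOf (pref v) P p).card

/-- Fraction of voters whose most-preferred running party lies in `A`. -/
noncomputable def voteFrac [Fintype V] (pref : V → LinearOrder U) (P A : Finset U) : ℚ :=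
  (votes pref P A : ℚ) / (Fintype.card V : ℚ)

/-- Total number of votes received by active parties (receiving at least `T` votes) among `A`. -/
noncomputable def activeVotes [Fintype V] (pref : V → LinearOrder U) (P : Finset U) (T : ℕ)
    (A : Finset U) : ℕ :=
  ∑ p ∈ A, if T ≤ votes pref P {p} then votes pref P {p} else 0

/-- Active-vote fraction of `A`. -/
noncomputable def activeFrac [Fintype V] (pref : V → LinearOrder U) (P : Finset U) (T : ℕ)
    (A : Finset U) : ℚ :=
  (activeVotes pref P T A : ℚ) / (activeVotes pref P T P : ℚ)

/-- The linear order `L` respects the tier function `t` (smaller tier = more preferred). -/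
def PrefTiers (L : LinearOrder U) (t : U → ℕ) : Prop :=
  ∀ a b : U, t a < t b → L.lt b a

/-- Pairs `(p, q)` with `p ≻ q` under `L` and `q ≻ p` under `L'`. -/
noncomputable def invPairs [Fintype U] (L L' : LinearOrder U) : Finset (U × U) :=
  Finset.univ.filter fun pq : U × U => L.lt pq.2 pq.1 ∧ L'.lt pq.1 pq.2

/-- Swap-bribery cost of replacing `L` by `L'` with swap-price function `sw`. -/
noncomputable def swapCost [Fintype U] (L L' : LinearOrder U) (sw : U → U → ℝ) : ℝ :=
  ∑ pq ∈ invPairs L L', sw pq.1 pq.2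

end Defs

/-!
Parties $p_1, o_2, o_3$ are `Sum.inr 0, 1, 2` and the spoiler $s_w$ is `Sum.inl w`; voter
`(w, i)` is the `i`-th voter of vertex `w`. Once the spoilers of a vertex set $D$ are running,
voters `0, 1` vote $p_1$, voters `2, 3` vote $o_2$, and voter `4` of $w$ votes for a spoiler of
$N[w]$ if $D$ meets $N[w]$, and for $o_2$ otherwise. So $p_1$ gets $2|W|$ votes, $o_2$ gets $2|W|$
plus the number $m$ of vertices not dominated by $D$, and $o_3$ and every spoiler get at most
$|W| < 2|W|$ votes and are inactive. The active-vote fraction of $p_1$ is $2|W| / (4|W| + m)$,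
which is at least $1/2$ iff $m = 0$.
-/

open Finset

theorem TopOf.unique {U : Type*} {L : LinearOrder U} {P : Finset U} {p q : U}
    (hp : TopOf L P p) (hq : TopOf L P q) : p = q := by
  by_contra hne
  exact @lt_asymm _ L.toPreorder _ _ (hp.2 q hq.1 (Ne.symm hne)) (hq.2 p hp.1 hne)

theorem PrefTiers.topOf {U : Type*} {L : LinearOrder U} {t : U → ℕ} {P : Finset U} {p : U}
    (h : PrefTiers L t) (hp : p ∈ P) (hmin : ∀ q ∈ P, q ≠ p → t p < t q) : TopOf L P p :=
  ⟨hp, fun q hq hne => h p q (hmin q hq hne)⟩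

theorem PrefTiers.not_topOf {U : Type*} {L : LinearOrder U} {t : U → ℕ} {P : Finset U}
    {p q : U} (h : PrefTiers L t) (hq : q ∈ P) (hlt : t q < t p) : ¬ TopOf L P p := fun hp =>
  @lt_asymm _ L.toPreorder _ _ (hp.2 q hq (ne_of_apply_ne t hlt.ne)) (h q p hlt)

theorem votes_singleton_prod {U W ι : Type*} [Fintype W] [Fintype ι]
    (pref : W × ι → LinearOrder U) (P : Finset U) (p : U) :
    votes pref P {p} = ∑ w, #{i | TopOf (pref (w, i)) P p} := by
  simp only [votes, card_filter, Fintype.sum_prod_type, mem_singleton, exists_eq_left]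

theorem activeVotes_singleton_of_le {U V : Type*} [Fintype V] {pref : V → LinearOrder U}
    {P : Finset U} {T : ℕ} {p : U} (h : T ≤ votes pref P {p}) :
    activeVotes pref P T {p} = votes pref P {p} := by
  rw [activeVotes, sum_singleton, if_pos h]

theorem activeVotes_eq_of_subset {U V : Type*} [Fintype V] {pref : V → LinearOrder U}
    {P A B : Finset U} {T : ℕ} (hAB : A ⊆ B) (h : ∀ p ∈ B, p ∉ A → votes pref P {p} < T) :
    activeVotes pref P T B = activeVotes pref P T A :=
  (sum_subset hAB fun p hpB hpA => if_neg (h p hpB hpA).not_ge).symm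

theorem half_le_div_iff_eq_zero {n m : ℕ} (hn : 0 < n) :
    (1 : ℚ) / 2 ≤ ((2 * n : ℕ) : ℚ) / ((4 * n + m : ℕ) : ℚ) ↔ m = 0 := by
  rw [div_le_div_iff₀ two_pos (by positivity)]
  norm_cast
  omega

namespace DominatingSetReduction

variable {W : Type*} [DecidableEq W] (G : SimpleGraph W) [DecidableRel G.Adj]

def tiers (w : W) (i : Fin 5) : W ⊕ Fin 3 → ℕ :=
  if i = 0 ∨ i = 1 then
    Sum.elim (fun _ => (2 : ℕ))
      (fun j : Fin 3 => if j = 0 then 0 else if j = 1 then 1 else 2)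
  else if i = 2 ∨ i = 3 then
    Sum.elim (fun _ => (2 : ℕ))
      (fun j : Fin 3 => if j = 1 then 0 else if j = 0 then 1 else 2)
  else
    Sum.elim (fun u => if u = w ∨ G.Adj w u then (0 : ℕ) else 3)
      (fun j : Fin 3 => if j = 1 then 1 else if j = 0 then 2 else 3)

def IsReductionProfile (pref : W × Fin 5 → LinearOrder (W ⊕ Fin 3)) : Prop :=
  ∀ w i, PrefTiers (pref (w, i)) (tiers G w i)

def Dominated (D : Finset W) (w : W) : Prop :=
  ∃ u ∈ D, u = w ∨ G.Adj u w

def running (D : Finset W) : Finset (W ⊕ Fin 3) :=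
  {Sum.inr 0, Sum.inr 1, Sum.inr 2} ∪ D.image Sum.inl

variable {G} {pref : W × Fin 5 → LinearOrder (W ⊕ Fin 3)} (D : Finset W) {w : W}

theorem inr_mem_running (j : Fin 3) : Sum.inr j ∈ running D := by
  fin_cases j <;> simp [running]

theorem inl_mem_running {u : W} (hu : u ∈ D) : Sum.inl u ∈ running D := by
  simp [running, hu]

theorem topOf_inr_zero (hpref : IsReductionProfile G pref) {i : Fin 5} (hi : i = 0 ∨ i = 1) :
    TopOf (pref (w, i)) (running D) (Sum.inr 0) := by
  refine (hpref w i).topOf (inr_mem_running D 0) ?_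
  rintro (u | j) - hne
  · rcases hi with rfl | rfl <;> simp [tiers]
  · fin_cases j <;> rcases hi with rfl | rfl <;> simp_all [tiers]

theorem topOf_inr_one (hpref : IsReductionProfile G pref) {i : Fin 5} (hi : i = 2 ∨ i = 3) :
    TopOf (pref (w, i)) (running D) (Sum.inr 1) := by
  refine (hpref w i).topOf (inr_mem_running D 1) ?_
  rintro (u | j) - hne
  · rcases hi with rfl | rfl <;> simp [tiers]
  · fin_cases j <;> rcases hi with rfl | rfl <;> simp_all [tiers]

theorem topOf_four_inr_one (hpref : IsReductionProfile G pref) (hw : ¬ Dominated G D w) :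
    TopOf (pref (w, 4)) (running D) (Sum.inr 1) := by
  refine (hpref w 4).topOf (inr_mem_running D 1) ?_
  rintro (u | j) hq hne
  · have hu : ¬ (u = w ∨ G.Adj w u) := fun h =>
      hw ⟨u, by simpa [running] using hq, h.imp_right SimpleGraph.Adj.symm⟩
    simp [tiers, hu]
  · fin_cases j <;> simp_all [tiers]

theorem not_topOf_four_inr_zero (hpref : IsReductionProfile G pref) :
    ¬ TopOf (pref (w, 4)) (running D) (Sum.inr 0) :=
  (hpref w 4).not_topOf (inr_mem_running D 1) (by simp [tiers])

theorem not_topOf_four_inr_one (hpref : IsReductionProfile G pref) (hw : Dominated G D w) :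
    ¬ TopOf (pref (w, 4)) (running D) (Sum.inr 1) := by
  obtain ⟨u, hu, huw⟩ := hw
  refine (hpref w 4).not_topOf (inl_mem_running D hu) ?_
  simp [tiers, huw.imp_right SimpleGraph.Adj.symm]

theorem topOf_inr_zero_iff (hpref : IsReductionProfile G pref) {i : Fin 5} :
    TopOf (pref (w, i)) (running D) (Sum.inr 0) ↔ i = 0 ∨ i = 1 := by
  refine ⟨fun h => ?_, topOf_inr_zero D hpref⟩
  fin_cases i
  · exact Or.inl rfl
  · exact Or.inr rfl
  · cases h.unique (topOf_inr_one D hpref (Or.inl rfl))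
  · cases h.unique (topOf_inr_one D hpref (Or.inr rfl))
  · exact absurd h (not_topOf_four_inr_zero D hpref)

theorem topOf_inr_one_iff (hpref : IsReductionProfile G pref) {i : Fin 5} :
    TopOf (pref (w, i)) (running D) (Sum.inr 1) ↔
      i = 2 ∨ i = 3 ∨ (i = 4 ∧ ¬ Dominated G D w) := by
  fin_cases i
  · exact iff_of_false (fun h => by cases h.unique (topOf_inr_zero D hpref (Or.inl rfl)))
      (by simp)
  · exact iff_of_false (fun h => by cases h.unique (topOf_inr_zero D hpref (Or.inr rfl)))
      (by simp)
  · exact iff_of_true (topOf_inr_one D hpref (Or.inl rfl)) (Or.inl rfl)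
  · exact iff_of_true (topOf_inr_one D hpref (Or.inr rfl)) (Or.inr (Or.inl rfl))
  · by_cases hw : Dominated G D w
    · exact iff_of_false (not_topOf_four_inr_one D hpref hw) (by simp [hw])
    · exact iff_of_true (topOf_four_inr_one D hpref hw) (by simp [hw])

theorem eq_four_of_topOf (hpref : IsReductionProfile G pref) {i : Fin 5} {p : W ⊕ Fin 3}
    (h : TopOf (pref (w, i)) (running D) p) (h0 : p ≠ Sum.inr 0) (h1 : p ≠ Sum.inr 1) :
    i = 4 := by
  fin_cases i
  · exact absurd (h.unique (topOf_inr_zero D hpref (Or.inl rfl))) h0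
  · exact absurd (h.unique (topOf_inr_zero D hpref (Or.inr rfl))) h0
  · exact absurd (h.unique (topOf_inr_one D hpref (Or.inl rfl))) h1
  · exact absurd (h.unique (topOf_inr_one D hpref (Or.inr rfl))) h1
  · rfl

variable [Fintype W]

theorem votes_inr_zero (hpref : IsReductionProfile G pref) :
    votes pref (running D) {Sum.inr 0} = 2 * Fintype.card W := by
  rw [votes_singleton_prod, sum_const_nat fun w _ => ?_, card_univ, mul_comm]
  simp only [topOf_inr_zero_iff D hpref]
  rfl

theorem votes_inr_one (hpref : IsReductionProfile G pref) :
    votes pref (running D) {Sum.inr 1} =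
      2 * Fintype.card W + #{w | ¬ Dominated G D w} := by
  have hcount : ∀ w, #{i | TopOf (pref (w, i)) (running D) (Sum.inr 1)} =
      2 + if ¬ Dominated G D w then 1 else 0 := by
    intro w
    by_cases hw : Dominated G D w <;> simp only [topOf_inr_one_iff D hpref, hw] <;> rfl
  simp only [votes_singleton_prod, hcount, sum_add_distrib, sum_const, card_univ, smul_eq_mul,
    sum_boole, Nat.cast_id, mul_comm]

theorem votes_le_card (hpref : IsReductionProfile G pref) {p : W ⊕ Fin 3}
    (h0 : p ≠ Sum.inr 0) (h1 : p ≠ Sum.inr 1) :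
    votes pref (running D) {p} ≤ Fintype.card W := by
  rw [votes_singleton_prod, ← card_univ, card_eq_sum_ones univ]
  refine sum_le_sum fun w _ => card_le_one.2 fun i hi j hj => ?_
  rw [mem_filter] at hi hj
  rw [eq_four_of_topOf D hpref hi.2 h0 h1, eq_four_of_topOf D hpref hj.2 h0 h1]

theorem activeFrac_running [Nonempty W] (hpref : IsReductionProfile G pref) :
    activeFrac pref (running D) (2 * Fintype.card W) {Sum.inr 0} =
      ((2 * Fintype.card W : ℕ) : ℚ) /
        ((4 * Fintype.card W + #{w | ¬ Dominated G D w} : ℕ) : ℚ) := by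
  have hspoilers : ∀ p ∈ running D, p ∉ ({Sum.inr 0, Sum.inr 1} : Finset _) →
      votes pref (running D) {p} < 2 * Fintype.card W := by
    intro p _ hp
    simp only [mem_insert, mem_singleton, not_or] at hp
    have := votes_le_card D hpref hp.1 hp.2
    have : 0 < Fintype.card W := Fintype.card_pos
    omega
  have hpair : ({Sum.inr 0, Sum.inr 1} : Finset (W ⊕ Fin 3)) ⊆ running D := by
    simp [insert_subset_iff, inr_mem_running]
  rw [activeFrac, activeVotes_eq_of_subset hpair hspoilers,
    activeVotes_singleton_of_le (votes_inr_zero D hpref).ge, activeVotes, sum_pair (by simp),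
    votes_inr_zero D hpref, votes_inr_one D hpref, if_pos le_rfl, if_pos (Nat.le_add_right _ _)]
  congr 2
  ring

theorem half_le_activeFrac_iff [Nonempty W] (hpref : IsReductionProfile G pref) :
    (1 : ℚ) / 2 ≤ activeFrac pref (running D) (2 * Fintype.card W) {Sum.inr 0} ↔
      ∀ w, Dominated G D w := by
  rw [activeFrac_running D hpref, half_le_div_iff_eq_zero Fintype.card_pos, card_eq_zero,
    filter_eq_empty_iff]
  simp

end DominatingSetReduction

/-- Election (adding opposition parties, J objective, threshold $τ = 2/5$,
i.e. active iff at least $2|W|$ votes): running parties $p_1$ (= `Sum.inr 0`),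
$o_2$ (= `Sum.inr 1`), $o_3$ (= `Sum.inr 2`); spoilers $s_w$ (= `Sum.inl w`).  Per vertex
$w$: two voters rank $p_1 ≻ o_2 ≻$ rest, two rank $o_2 ≻ p_1 ≻$ rest, and one ranks
$\{s_u : u ∈ N[w]\}$ first, then $o_2$, then $p_1$, then the rest.  Then $G$ has a dominating
set of size at most $k$ iff at most $k$ spoilers can be added so that $\{p_1\}$ gets
active-vote fraction at least $1/2$. -/
theorem aop_threshold_dominating_set_reduction
    {W : Type*} [Fintype W] [DecidableEq W] [Nonempty W]
    (G : SimpleGraph W) [DecidableRel G.Adj] (k : ℕ)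
    (pref : W × Fin 5 → LinearOrder (W ⊕ Fin 3))
    (hpref : ∀ (w : W) (i : Fin 5), PrefTiers (pref (w, i))
      (if i = 0 ∨ i = 1 then
        Sum.elim (fun _ => (2 : ℕ))
          (fun j : Fin 3 => if j = 0 then 0 else if j = 1 then 1 else 2)
      else if i = 2 ∨ i = 3 then
        Sum.elim (fun _ => (2 : ℕ))
          (fun j : Fin 3 => if j = 1 then 0 else if j = 0 then 1 else 2)
      else
        Sum.elim (fun u => if u = w ∨ G.Adj w u then (0 : ℕ) else 3)
          (fun j : Fin 3 => if j = 1 then 1 else if j = 0 then 2 else 3))) :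
    (∃ W' : Finset W, W'.card ≤ k ∧ ∀ w : W, ∃ u ∈ W', u = w ∨ G.Adj u w) ↔
    (∃ Sp : Finset (W ⊕ Fin 3), Sp ⊆ Finset.univ.image Sum.inl ∧ Sp.card ≤ k ∧
      (1 : ℚ) / 2 ≤ activeFrac pref ({Sum.inr 0, Sum.inr 1, Sum.inr 2} ∪ Sp)
        (2 * Fintype.card W) {Sum.inr 0}) := by
  constructor
  · rintro ⟨D, hcard, hdom⟩
    exact ⟨D.image Sum.inl, image_subset_image (subset_univ D), card_image_le.trans hcard,
      (DominatingSetReduction.half_le_activeFrac_iff D hpref).2 hdom⟩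
  · rintro ⟨Sp, hSp, hcard, hfrac⟩
    obtain ⟨D, -, rfl⟩ := subset_image_iff.1 hSp
    rw [card_image_of_injective D Sum.inl_injective] at hcard
    exact ⟨D, hcard, (DominatingSetReduction.half_le_activeFrac_iff D hpref).1 hfrac⟩
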